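/- arXiv:1212.4574 — 7 statements merged into one kernel-verified Lean document; each statement's English description precedes it below -/
import Mathlib

section
/- If g : [a,b] → ℝ has a derivative (finite or infinite) at every point of a set E ⊆ [a,b] and the image g(E) has Lebesgue measure zero, then g'(x) = 0 for almost every x ∈ E. -/
/-!
Where the (possibly infinite) derivative of `g` at `x` is not `0`, the difference quotients stay
away from `0`, so `|y - x| ≤ K |g y - g x|` for all `y` near `x`. Grading the points by `K` and
the radius, the bad set is a countable union of pieces that are locally sets on which `g` has a
`K`-Lipschitz inverse. A Lipschitz map does not increase Hausdorff measure, so each such local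
piece is null because its image is, and hence so is the bad set.
-/

open Set MeasureTheory Filter
open scoped Classical

/-- A tagged partition of `[a, b]`: division points `t 0 = a ≤ t 1 ≤ ⋯ ≤ t n = b`
together with tags `tag i ∈ [t i, t (i+1)]`. -/
structure TaggedPartition (a b : ℝ) where
  n : ℕ
  t : ℕ → ℝ
  tag : ℕ → ℝ
  t_first : t 0 = a
  t_last : t n = b
  t_mono : ∀ i < n, t i ≤ t (i + 1)
  tag_mem : ∀ i < n, tag i ∈ Set.Icc (t i) (t (i + 1))

/-- A tagged partition is subordinate to a gauge `δ` if each interval is contained in the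
open ball of radius `δ` around its tag. -/
def TaggedPartition.Subordinate {a b : ℝ} (P : TaggedPartition a b) (δ : ℝ → ℝ) : Prop :=
  ∀ i < P.n,
    Set.Icc (P.t i) (P.t (i + 1)) ⊆ Set.Ioo (P.tag i - δ (P.tag i)) (P.tag i + δ (P.tag i))

/-- A gauge on `[a, b]` is positive on `[a, b]`. -/
def IsGauge (a b : ℝ) (δ : ℝ → ℝ) : Prop := ∀ x ∈ Set.Icc a b, 0 < δ x

/-- `f` has negligible variation on `E ⊆ [a, b]`. -/

def NegVar (a b : ℝ) (f : ℝ → ℝ) (E : Set ℝ) : Prop :=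
  ∀ ε > 0, ∃ δ : ℝ → ℝ, IsGauge a b δ ∧ ∀ P : TaggedPartition a b, P.Subordinate δ →
    (∑ i ∈ Finset.range P.n,
      if P.tag i ∈ E then |f (P.t (i + 1)) - f (P.t i)| else 0) < ε

/-- `f` has negligible conditional variation on `E ⊆ [a, b]`. -/

def NegCondVar (a b : ℝ) (f : ℝ → ℝ) (E : Set ℝ) : Prop :=
  ∀ ε > 0, ∃ δ : ℝ → ℝ, IsGauge a b δ ∧ ∀ P : TaggedPartition a b, P.Subordinate δ →
    |∑ i ∈ Finset.range P.n,
      if P.tag i ∈ E then f (P.t (i + 1)) - f (P.t i) else 0| < ε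

/-- `I` is the Henstock–Kurzweil integral of `h` on `[a, b]` (with `a ≤ b`). -/
def HKIntegralTo (a b : ℝ) (h : ℝ → ℝ) (I : ℝ) : Prop :=
  ∀ ε > 0, ∃ δ : ℝ → ℝ, IsGauge a b δ ∧ ∀ P : TaggedPartition a b, P.Subordinate δ →
    |(∑ i ∈ Finset.range P.n, h (P.tag i) * (P.t (i + 1) - P.t i)) - I| < ε

/-- Oriented HK integral: `(HK)∫_a^b h = I`, with the convention
`(HK)∫_b^a h = -(HK)∫_a^b h`. -/
def HKIntegral (a b : ℝ) (h : ℝ → ℝ) (I : ℝ) : Prop :=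
  if a ≤ b then HKIntegralTo a b h I else HKIntegralTo b a h (-I)

open scoped NNReal Topology

section Hausdorff

variable {X Y : Type*} [MetricSpace X] [MetricSpace Y] [MeasurableSpace X] [BorelSpace X]
  [MeasurableSpace Y] [BorelSpace Y] {f : X → Y} {s : Set X} {d : ℝ}

theorem hausdorffMeasure_eq_zero_of_dist_le_mul_dist {K : ℝ≥0}
    (hf : ∀ x ∈ s, ∀ y ∈ s, dist x y ≤ K * dist (f x) (f y)) (hd : 0 ≤ d)
    (himg : μH[d] (f '' s) = 0) : μH[d] s = 0 := by
  rcases s.eq_empty_or_nonempty with rfl | ⟨x₀, -⟩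
  · exact measure_empty
  have : Nonempty X := ⟨x₀⟩
  have hinv : ∀ x ∈ s, Function.invFunOn f s (f x) = x := fun x hx => by
    have hex : ∃ y ∈ s, f y = f x := ⟨x, hx, rfl⟩
    have := hf _ (Function.invFunOn_mem hex) x hx
    rwa [Function.invFunOn_eq hex, dist_self, mul_zero, dist_le_zero] at this
  have hlip : LipschitzOnWith K (Function.invFunOn f s) (f '' s) := by
    refine LipschitzOnWith.of_dist_le_mul ?_
    rintro _ ⟨x, hx, rfl⟩ _ ⟨y, hy, rfl⟩
    rw [hinv x hx, hinv y hy]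
    exact hf x hx y hy
  have hsub : s ⊆ Function.invFunOn f s '' (f '' s) := fun x hx =>
    ⟨f x, mem_image_of_mem f hx, hinv x hx⟩
  refine measure_mono_null hsub (le_antisymm ?_ zero_le)
  simpa [himg] using hlip.hausdorffMeasure_image_le hd

theorem hausdorffMeasure_eq_zero_of_forall_dist_le_mul_dist [SecondCountableTopology X]
    (hf : ∀ x ∈ s, ∃ K : ℝ, ∃ r > 0, ∀ y ∈ s, dist y x < r → dist y x ≤ K * dist (f y) (f x))
    (hd : 0 ≤ d) (himg : μH[d] (f '' s) = 0) : μH[d] s = 0 := by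
  set A : ℕ → Set X := fun n =>
    {x ∈ s | ∀ y ∈ s, dist y x < (n + 1 : ℝ)⁻¹ → dist y x ≤ (n + 1 : ℝ≥0) * dist (f y) (f x)}
  have hcover : s ⊆ ⋃ n, A n := by
    intro x hx
    obtain ⟨K, r, hr, hK⟩ := hf x hx
    obtain ⟨n, hn⟩ := exists_nat_ge (max K r⁻¹)
    have hKn : K ≤ n + 1 := by linarith [le_max_left K r⁻¹]
    have hrn : (n + 1 : ℝ)⁻¹ < r := inv_lt_of_inv_lt₀ hr (by linarith [le_max_right K r⁻¹])
    refine mem_iUnion.mpr ⟨n, hx, fun y hy hyx => ?_⟩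
    push_cast
    exact (hK y hy (hyx.trans hrn)).trans (by gcongr)
  refine measure_mono_null hcover (measure_iUnion_null fun n => ?_)
  refine measure_null_of_locally_null _ fun x hx => ⟨A n ∩ Metric.ball x ((n + 1 : ℝ)⁻¹ / 2),
    inter_mem_nhdsWithin _ (Metric.ball_mem_nhds x (by positivity)), ?_⟩
  refine hausdorffMeasure_eq_zero_of_dist_le_mul_dist (K := n + 1) ?_ hd
    (measure_mono_null (image_mono fun y hy => hy.1.1) himg)
  rintro y ⟨hyA, hyx⟩ z ⟨hzA, hzx⟩
  rw [dist_comm y, dist_comm (f y)]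
  refine hyA.2 z hzA.1 ?_
  have := dist_triangle_right z y x
  rw [Metric.mem_ball] at hyx hzx
  linarith

end Hausdorff

theorem exists_pos_eventually_le_abs_slope {g : ℝ → ℝ} {x : ℝ}
    (hx : (∃ L : ℝ, HasDerivAt g L x) ∨
      Tendsto (fun y => (g y - g x) / (y - x)) (𝓝[≠] x) atTop ∨
      Tendsto (fun y => (g y - g x) / (y - x)) (𝓝[≠] x) atBot)
    (h0 : ¬HasDerivAt g 0 x) : ∃ c > 0, ∀ᶠ y in 𝓝[≠] x, c ≤ |(g y - g x) / (y - x)| := by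
  rcases hx with ⟨L, hL⟩ | hT | hT
  · have hL0 : 0 < |L| := abs_pos.mpr fun h => h0 (h ▸ hL)
    have hT : Tendsto (fun y => |(g y - g x) / (y - x)|) (𝓝[≠] x) (𝓝 |L|) := by
      simpa only [slope_def_field] using (hasDerivAt_iff_tendsto_slope.mp hL).abs
    exact ⟨|L| / 2, half_pos hL0, hT.eventually (eventually_ge_nhds (half_lt_self hL0))⟩
  · exact ⟨1, one_pos, (tendsto_abs_atTop_atTop.comp hT).eventually_ge_atTop 1⟩
  · exact ⟨1, one_pos, (tendsto_abs_atBot_atTop.comp hT).eventually_ge_atTop 1⟩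

theorem exists_dist_le_mul_dist_of_eventually_le_abs_slope {g : ℝ → ℝ} {x c : ℝ} (hc : 0 < c)
    (h : ∀ᶠ y in 𝓝[≠] x, c ≤ |(g y - g x) / (y - x)|) :
    ∃ r > 0, ∀ y, dist y x < r → dist y x ≤ c⁻¹ * dist (g y) (g x) := by
  obtain ⟨r, hr, hball⟩ := Metric.eventually_nhds_iff.mp (eventually_nhdsWithin_iff.mp h)
  refine ⟨r, hr, fun y hy => ?_⟩
  rcases eq_or_ne y x with rfl | hyx
  · simp
  have hpos : 0 < dist y x := dist_pos.mpr hyx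
  have := hball hy hyx
  rw [abs_div, le_div_iff₀ (by simpa [Real.dist_eq] using hpos)] at this
  rw [le_inv_mul_iff₀ hc]
  simpa [Real.dist_eq] using this

theorem stmt0_general (g : ℝ → ℝ) (E : Set ℝ)
    (hderiv : ∀ x ∈ E, (∃ L : ℝ, HasDerivAt g L x) ∨
      Filter.Tendsto (fun y => (g y - g x) / (y - x)) (nhdsWithin x {x}ᶜ) Filter.atTop ∨
      Filter.Tendsto (fun y => (g y - g x) / (y - x)) (nhdsWithin x {x}ᶜ) Filter.atBot)
    (himg : MeasureTheory.volume (g '' E) = 0) :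
    MeasureTheory.volume {x ∈ E | ¬ HasDerivAt g 0 x} = 0 := by
  have hexpand : ∀ x ∈ {x ∈ E | ¬HasDerivAt g 0 x}, ∃ K : ℝ, ∃ r > 0,
      ∀ y ∈ {x ∈ E | ¬HasDerivAt g 0 x}, dist y x < r → dist y x ≤ K * dist (g y) (g x) := by
    rintro x ⟨hxE, hx0⟩
    obtain ⟨c, hc, hslope⟩ := exists_pos_eventually_le_abs_slope (hderiv x hxE) hx0
    obtain ⟨r, hr, hdist⟩ := exists_dist_le_mul_dist_of_eventually_le_abs_slope hc hslope
    exact ⟨c⁻¹, r, hr, fun y _ => hdist y⟩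
  rw [← hausdorffMeasure_real] at himg ⊢
  exact hausdorffMeasure_eq_zero_of_forall_dist_le_mul_dist hexpand zero_le_one
    (measure_mono_null (image_mono (sep_subset _ _)) himg)

/-- If `g` has a derivative (finite or infinite) at every point of `E ⊆ [a,b]`
and `g(E)` has measure zero, then `g' = 0` almost everywhere on `E`. -/
theorem stmt0 (a b : ℝ) (g : ℝ → ℝ) (E : Set ℝ) (hE : E ⊆ Set.Icc a b)
    (hderiv : ∀ x ∈ E, (∃ L : ℝ, HasDerivAt g L x) ∨
      Filter.Tendsto (fun y => (g y - g x) / (y - x)) (nhdsWithin x {x}ᶜ) Filter.atTop ∨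
      Filter.Tendsto (fun y => (g y - g x) / (y - x)) (nhdsWithin x {x}ᶜ) Filter.atBot)
    (himg : MeasureTheory.volume (g '' E) = 0) :
    MeasureTheory.volume {x ∈ E | ¬ HasDerivAt g 0 x} = 0 :=
  stmt0_general g E hderiv himg
end

section
/- Assume g : [a,b] → D and F : D → ℝ both have (finite) derivatives almost everywhere, and f = F' almost everywhere on D. Then g'(x) = 0 for almost every x ∈ [a,b] at which the chain-rule equality (F ∘ g)'(x) = f(g(x))·g'(x) fails (i.e. where either side is undefined or the equality is false). -/
open Set MeasureTheory Filter
open scoped Classical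

/-! Off a null subset of `[a, b]` the map `g` is differentiable, and the chain rule holds at
every such point whose image avoids the null set `N ⊆ D` where `F' = f` fails. It remains to see
that `{x | g x ∈ N, g' x ≠ 0}` is null. Near a point with `g' x ≠ 0` the map `g` expands distances
by a definite factor, so this set is a countable union of pieces on each of which `g` is
antilipschitz; an antilipschitz map cannot send a set of positive measure into a null set. -/

open scoped NNReal ENNReal Topology

theorem hausdorffMeasure_eq_zero_of_antilipschitzWith_domRestrict
    {X Y : Type*} [EMetricSpace X] [EMetricSpace Y] [MeasurableSpace X] [BorelSpace X]
    [MeasurableSpace Y] [BorelSpace Y] {f : X → Y} {s : Set X} {K : ℝ≥0} {d : ℝ}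
    (hf : AntilipschitzWith K (s.domRestrict f)) (hd : 0 ≤ d) (hs : μH[d] (f '' s) = 0) :
    μH[d] s = 0 := by
  refine le_antisymm ?_ zero_le
  calc μH[d] s = μH[d] (univ : Set s) := by
        simpa using isometry_subtype_coe.hausdorffMeasure_image (Or.inl hd) (univ : Set s)
    _ ≤ (K : ℝ≥0∞) ^ d * μH[d] (s.domRestrict f '' univ) := hf.le_hausdorffMeasure_image hd univ
    _ = 0 := by simp [hs]

theorem HasDerivAt.eventually_dist_le_mul_dist {𝕜 F : Type*} [NontriviallyNormedField 𝕜]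
    [NormedAddCommGroup F] [NormedSpace 𝕜 F] {g : 𝕜 → F} {v : F} {x : 𝕜}
    (hg : HasDerivAt g v x) (hv : v ≠ 0) :
    ∀ᶠ y in 𝓝 x, dist y x ≤ 2 / ‖v‖ * dist (g y) (g x) := by
  have hv' : 0 < ‖v‖ := norm_pos_iff.mpr hv
  filter_upwards [hg.isLittleO.def (half_pos hv')] with y hy
  have hlin : ‖(y - x) • v‖ - ‖g y - g x‖ ≤ ‖g y - g x - (y - x) • v‖ := by
    simpa [norm_sub_rev] using norm_sub_norm_le ((y - x) • v) (g y - g x)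
  rw [norm_smul] at hlin
  rw [dist_eq_norm, dist_eq_norm, div_mul_eq_mul_div, le_div_iff₀ hv']
  nlinarith

def expansionPiece {Y : Type*} [PseudoMetricSpace Y] (g : ℝ → Y) (n : ℕ) (j : ℤ) : Set ℝ :=
  {x | x ∈ Ico ((j : ℝ) / (n + 1)) ((j + 1) / (n + 1)) ∧
    ∀ y, dist y x < 1 / (n + 1) → dist y x ≤ (n + 1) * dist (g y) (g x)}

theorem antilipschitzWith_domRestrict_of_subset_expansionPiece {Y : Type*} [PseudoMetricSpace Y]
    {g : ℝ → Y} {n : ℕ} {j : ℤ} {s : Set ℝ} (hs : s ⊆ expansionPiece g n j) :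
    AntilipschitzWith (n + 1) (s.domRestrict g) := by
  refine AntilipschitzWith.of_le_mul_dist fun x y => ?_
  obtain ⟨⟨hx₀, hx₁⟩, -⟩ := hs x.2
  obtain ⟨⟨hy₀, hy₁⟩, hy⟩ := hs y.2
  have hn : (0 : ℝ) < n + 1 := by positivity
  have hlen : ((j : ℝ) + 1) / (n + 1) - j / (n + 1) = 1 / (n + 1) := by field_simp; ring
  have hxy : dist (x : ℝ) y < 1 / (n + 1) := by
    rw [Real.dist_eq, abs_sub_lt_iff]; constructor <;> linarith
  simpa [Subtype.dist_eq] using hy x hxy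

theorem exists_mem_expansionPiece {Y : Type*} [PseudoMetricSpace Y] {g : ℝ → Y} {x C : ℝ}
    (h : ∀ᶠ y in 𝓝 x, dist y x ≤ C * dist (g y) (g x)) :
    ∃ n j, x ∈ expansionPiece g n j := by
  obtain ⟨r, hr, hball⟩ := Metric.eventually_nhds_iff.mp h
  obtain ⟨n, hn⟩ := exists_nat_gt (max C (1 / r))
  have hn₁ : (0 : ℝ) < n + 1 := by positivity
  have hC : C ≤ n + 1 := by linarith [le_max_left C (1 / r)]
  have hr' : 1 / (n + 1 : ℝ) < r := by
    rw [div_lt_iff₀ hn₁, ← div_lt_iff₀' hr]; linarith [le_max_right C (1 / r)]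
  refine ⟨n, ⌊x * ((n : ℝ) + 1)⌋, ⟨⟨?_, ?_⟩, fun y hy => ?_⟩⟩
  · rw [div_le_iff₀ hn₁]; exact Int.floor_le _
  · rw [lt_div_iff₀ hn₁]; exact Int.lt_floor_add_one _
  · exact (hball (hy.trans hr')).trans (by gcongr)

theorem volume_setOf_mem_preimage_hasDerivAt_ne_zero (g : ℝ → ℝ) {N : Set ℝ}
    (hN : volume N = 0) : volume {x | g x ∈ N ∧ ∃ L ≠ 0, HasDerivAt g L x} = 0 := by
  have hpiece : ∀ n j, volume (expansionPiece g n j ∩ g ⁻¹' N) = 0 := fun n j => by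
    have hanti := antilipschitzWith_domRestrict_of_subset_expansionPiece
      (inter_subset_left : expansionPiece g n j ∩ g ⁻¹' N ⊆ _)
    have himage : volume (g '' (expansionPiece g n j ∩ g ⁻¹' N)) = 0 :=
      measure_mono_null (image_subset_iff.mpr inter_subset_right) hN
    rw [← hausdorffMeasure_real] at himage ⊢
    exact hausdorffMeasure_eq_zero_of_antilipschitzWith_domRestrict hanti zero_le_one himage
  refine measure_mono_null ?_ (measure_iUnion_null fun n => measure_iUnion_null (hpiece n))
  rintro x ⟨hgx, L, hL, hderiv⟩
  obtain ⟨n, j, hx⟩ := exists_mem_expansionPiece (hderiv.eventually_dist_le_mul_dist hL)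
  exact mem_iUnion₂.mpr ⟨n, j, hx, hgx⟩

/-- `g' = 0` a.e. at the points where the chain rule
`(F ∘ g)' = (f ∘ g) · g'` fails. -/
theorem stmt1 (a b : ℝ) (D : Set ℝ) (g F f : ℝ → ℝ)
    (hD : Set.MapsTo g (Set.Icc a b) D)
    (hg : ∀ᵐ x ∂(MeasureTheory.volume.restrict (Set.Icc a b)), DifferentiableAt ℝ g x)
    (hF : ∀ᵐ x ∂(MeasureTheory.volume.restrict D), DifferentiableAt ℝ F x)
    (hf : ∀ᵐ x ∂(MeasureTheory.volume.restrict D), deriv F x = f x) :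
    MeasureTheory.volume {x ∈ Set.Icc a b |
      (¬ ∃ L : ℝ, HasDerivAt g L x ∧ HasDerivAt (F ∘ g) (f (g x) * L) x) ∧
      ¬ HasDerivAt g 0 x} = 0 := by
  have hg_null : volume ({x | ¬ DifferentiableAt ℝ g x} ∩ Icc a b) = 0 :=
    le_antisymm ((Measure.le_restrict_apply _ _).trans (ae_iff.mp hg).le) zero_le
  set N := {y | ¬ (DifferentiableAt ℝ F y ∧ deriv F y = f y)} ∩ D
  have hN : volume N = 0 :=
    le_antisymm ((Measure.le_restrict_apply _ _).trans (ae_iff.mp (hF.and hf)).le) zero_le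
  refine measure_mono_null ?_
    (measure_union_null hg_null (volume_setOf_mem_preimage_hasDerivAt_ne_zero g hN))
  rintro x ⟨hx, hfail, hnz⟩
  by_cases hgx : DifferentiableAt ℝ g x
  · refine Or.inr ⟨?_, deriv g x, fun h0 => hnz (h0 ▸ hgx.hasDerivAt), hgx.hasDerivAt⟩
    by_contra hgxN
    obtain ⟨hFgx, hfgx⟩ : DifferentiableAt ℝ F (g x) ∧ deriv F (g x) = f (g x) := by
      by_contra h
      exact hgxN ⟨h, hD hx⟩
    exact hfail ⟨deriv g x, hgx.hasDerivAt, hfgx ▸ hFgx.hasDerivAt.comp x hgx.hasDerivAt⟩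
  · exact Or.inl ⟨hgx, hx⟩
end

section
/- Let f : [a,b] → ℝ and E ⊆ [a,b]. If for every subinterval [α,β] ⊆ [a,b] the function f has negligible conditional variation on E ∩ [α,β], then f has negligible variation on E. -/
open Set MeasureTheory Filter
open scoped Classical

namespace HKAux

private lemma sum_range_split (m n : ℕ) (f : ℕ → ℝ) :
    ∑ i ∈ Finset.range (m + n), f i
      = ∑ i ∈ Finset.range m, f i + ∑ i ∈ Finset.range n, f (m + i) := by
  induction n with
  | zero => simp
  | succ k ih =>
      rw [← Nat.add_assoc, Finset.sum_range_succ, ih, Finset.sum_range_succ]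
      ring

/-- Riemann-type sum of a general interval function over a tagged partition. -/
noncomputable def sumF {a b : ℝ} (P : TaggedPartition a b) (g : ℝ → ℝ → ℝ → ℝ) : ℝ :=
  ∑ i ∈ Finset.range P.n, g (P.tag i) (P.t i) (P.t (i + 1))

lemma t_le_t {a b : ℝ} (P : TaggedPartition a b) {i j : ℕ} (hij : i ≤ j) (hj : j ≤ P.n) :
    P.t i ≤ P.t j := by
  induction j with
  | zero => simp_all
  | succ k ih =>
      rcases Nat.lt_or_ge i (k + 1) with hk | hk
      · exact le_trans (ih (Nat.lt_succ_iff.mp hk) (le_trans (Nat.le_succ k) hj))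
          (P.t_mono k (Nat.lt_of_lt_of_le (Nat.lt_succ_self k) hj))
      · have : i = k + 1 := le_antisymm hij hk
        simp [this]

lemma t_mem_Icc {a b : ℝ} (P : TaggedPartition a b) {i : ℕ} (hi : i ≤ P.n) :
    P.t i ∈ Set.Icc a b := by
  constructor
  · calc a = P.t 0 := P.t_first.symm
      _ ≤ P.t i := t_le_t P (Nat.zero_le i) hi
  · calc P.t i ≤ P.t P.n := t_le_t P hi le_rfl
      _ = b := P.t_last

lemma tag_mem_Icc {a b : ℝ} (P : TaggedPartition a b) {i : ℕ} (hi : i < P.n) :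
    P.tag i ∈ Set.Icc a b := by
  obtain ⟨h1, h2⟩ := P.tag_mem i hi
  constructor
  · exact le_trans (t_mem_Icc P (le_of_lt hi)).1 h1
  · exact le_trans h2 (t_mem_Icc P hi).2

lemma Subordinate.mono {a b : ℝ} {P : TaggedPartition a b} {γ δ : ℝ → ℝ}
    (hγδ : ∀ x, γ x ≤ δ x) (hP : P.Subordinate γ) : P.Subordinate δ := by
  intro i hi x hx
  obtain ⟨h1, h2⟩ := hP i hi hx
  constructor
  · linarith [hγδ (P.tag i)]
  · linarith [hγδ (P.tag i)]

/-- The trivial partition of `[c, c]`. -/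
def trivPart (c : ℝ) : TaggedPartition c c where
  n := 0
  t := fun _ => c
  tag := fun _ => c
  t_first := rfl
  t_last := rfl
  t_mono := by intro i hi; omega
  tag_mem := by intro i hi; omega

lemma trivPart_sub (c : ℝ) (δ : ℝ → ℝ) : (trivPart c).Subordinate δ := by
  intro i hi; exact absurd hi (by simp [trivPart])

lemma trivPart_sumF (c : ℝ) (g : ℝ → ℝ → ℝ → ℝ) : sumF (trivPart c) g = 0 := by
  simp [sumF, trivPart]

/-- The single-interval partition of `[c, d]` with tag `x`. -/
def single (c d x : ℝ) (hc : c ≤ x) (hd : x ≤ d) : TaggedPartition c d where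
  n := 1
  t := fun i => if i = 0 then c else d
  tag := fun _ => x
  t_first := rfl
  t_last := rfl
  t_mono := by intro i hi; interval_cases i; simpa using le_trans hc hd
  tag_mem := by intro i hi; interval_cases i; simpa using ⟨hc, hd⟩

lemma single_sumF (c d x : ℝ) (hc : c ≤ x) (hd : x ≤ d) (g : ℝ → ℝ → ℝ → ℝ) :
    sumF (single c d x hc hd) g = g x c d := by
  simp [sumF, single]

lemma single_sub (c d x : ℝ) (hc : c ≤ x) (hd : x ≤ d) (δ : ℝ → ℝ)
    (hsub : Set.Icc c d ⊆ Set.Ioo (x - δ x) (x + δ x)) :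
    (single c d x hc hd).Subordinate δ := by
  intro i hi
  have : i = 0 := by simpa [single] using Nat.lt_one_iff.mp hi
  subst this
  simpa [single] using hsub

/-- Concatenation of tagged partitions. -/
def concat {a c b : ℝ} (P : TaggedPartition a c) (Q : TaggedPartition c b) :
    TaggedPartition a b where
  n := P.n + Q.n
  t := fun i => if i < P.n then P.t i else Q.t (i - P.n)
  tag := fun i => if i < P.n then P.tag i else Q.tag (i - P.n)
  t_first := by
    rcases Nat.eq_zero_or_pos P.n with h0 | h0
    · have : P.t 0 = c := by rw [← h0]; exact h0 ▸ P.t_last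
      simp [h0, Q.t_first, ← P.t_first, this]
    · simp [h0, P.t_first]
  t_last := by
    have h1 : ¬ (P.n + Q.n < P.n) := by omega
    simp [h1, Q.t_last]
  t_mono := by
    intro i hi
    rcases Nat.lt_or_ge i P.n with h | h
    · rcases Nat.lt_or_ge (i + 1) P.n with h2 | h2
      · simpa [h, h2] using P.t_mono i h
      · have hi1 : i + 1 = P.n := by omega
        have : Q.t (i + 1 - P.n) = P.t (i + 1) := by
          rw [hi1]; simp [Q.t_first, ← P.t_last]
        simp only [if_pos h, if_neg (by omega : ¬ i + 1 < P.n), this]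
        exact P.t_mono i h
    · have h2 : ¬ (i + 1 < P.n) := by omega
      have h3 : i + 1 - P.n = (i - P.n) + 1 := by omega
      simp only [if_neg (by omega : ¬ i < P.n), if_neg h2, h3]
      exact Q.t_mono (i - P.n) (by omega)
  tag_mem := by
    intro i hi
    rcases Nat.lt_or_ge i P.n with h | h
    · rcases Nat.lt_or_ge (i + 1) P.n with h2 | h2
      · simpa [h, h2] using P.tag_mem i h
      · have hi1 : i + 1 = P.n := by omega
        have : Q.t (i + 1 - P.n) = P.t (i + 1) := by
          rw [hi1]; simp [Q.t_first, ← P.t_last]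
        simp only [if_pos h, if_neg (by omega : ¬ i + 1 < P.n), this]
        exact P.tag_mem i h
    · have h2 : ¬ (i + 1 < P.n) := by omega
      have h3 : i + 1 - P.n = (i - P.n) + 1 := by omega
      simp only [if_neg (by omega : ¬ i < P.n), if_neg h2, h3]
      exact Q.tag_mem (i - P.n) (by omega)

lemma concat_t_of_le {a c b : ℝ} (P : TaggedPartition a c) (Q : TaggedPartition c b)
    {i : ℕ} (hi : i ≤ P.n) : (concat P Q).t i = P.t i := by
  rcases Nat.lt_or_ge i P.n with h | h
  · simp [concat, h]
  · have : i = P.n := by omega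
    subst this
    simp [concat, Q.t_first, ← P.t_last]

lemma concat_t_of_ge {a c b : ℝ} (P : TaggedPartition a c) (Q : TaggedPartition c b)
    {i : ℕ} (hi : P.n ≤ i) : (concat P Q).t i = Q.t (i - P.n) := by
  rcases Nat.lt_or_ge i P.n with h | h
  · omega
  · simp [concat, Nat.not_lt.mpr h]

lemma concat_sub {a c b : ℝ} {P : TaggedPartition a c} {Q : TaggedPartition c b}
    {δ : ℝ → ℝ} (hP : P.Subordinate δ) (hQ : Q.Subordinate δ) :
    (concat P Q).Subordinate δ := by
  intro i hi
  have hn : (concat P Q).n = P.n + Q.n := rfl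
  rcases Nat.lt_or_ge i P.n with h | h
  · have e1 : (concat P Q).t i = P.t i := concat_t_of_le P Q (le_of_lt h)
    have e2 : (concat P Q).t (i + 1) = P.t (i + 1) := concat_t_of_le P Q (by omega)
    have e3 : (concat P Q).tag i = P.tag i := by simp [concat, h]
    rw [e1, e2, e3]
    exact hP i h
  · have e1 : (concat P Q).t i = Q.t (i - P.n) := concat_t_of_ge P Q h
    have e2 : (concat P Q).t (i + 1) = Q.t (i - P.n + 1) := by
      rw [concat_t_of_ge P Q (by omega)]; congr 1; omega
    have e3 : (concat P Q).tag i = Q.tag (i - P.n) := by simp [concat, Nat.not_lt.mpr h]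
    rw [e1, e2, e3]
    exact hQ (i - P.n) (by rw [hn] at hi; omega)

lemma concat_sumF {a c b : ℝ} (P : TaggedPartition a c) (Q : TaggedPartition c b)
    (g : ℝ → ℝ → ℝ → ℝ) : sumF (concat P Q) g = sumF P g + sumF Q g := by
  have hn : (concat P Q).n = P.n + Q.n := rfl
  rw [sumF, hn, sum_range_split]
  congr 1
  · apply Finset.sum_congr rfl
    intro i hi
    have hi' : i < P.n := Finset.mem_range.mp hi
    rw [concat_t_of_le P Q (le_of_lt hi'), concat_t_of_le P Q (by omega)]
    simp [concat, hi']
  · apply Finset.sum_congr rfl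
    intro i hi
    have hi' : i < Q.n := Finset.mem_range.mp hi
    have e1 : (concat P Q).t (P.n + i) = Q.t i := by
      rw [concat_t_of_ge P Q (by omega)]; congr 1; omega
    have e2 : (concat P Q).t (P.n + i + 1) = Q.t (i + 1) := by
      rw [concat_t_of_ge P Q (by omega)]; congr 1; omega
    have e3 : (concat P Q).tag (P.n + i) = Q.tag i := by
      simp only [concat, if_neg (by omega : ¬ P.n + i < P.n)]
      congr 1; omega
    rw [e1, e2, e3]

/-- Cousin's lemma: every gauge on `[α, β]` admits a subordinate tagged partition. -/
lemma cousin (α β : ℝ) (hab : α ≤ β) (δ : ℝ → ℝ) (hδ : IsGauge α β δ) :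
    ∃ P : TaggedPartition α β, P.Subordinate δ := by
  set A : Set ℝ := {x | x ∈ Set.Icc α β ∧ ∃ P : TaggedPartition α x, P.Subordinate δ} with hA
  have hαA : α ∈ A := ⟨⟨le_rfl, hab⟩, trivPart α, trivPart_sub α δ⟩
  have hne : A.Nonempty := ⟨α, hαA⟩
  have hbdd : BddAbove A := ⟨β, fun x hx => hx.1.2⟩
  set s := sSup A with hs
  have hsα : α ≤ s := le_csSup hbdd hαA
  have hsβ : s ≤ β := csSup_le hne (fun x hx => hx.1.2)
  have hδs : 0 < δ s := hδ s ⟨hsα, hsβ⟩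
  obtain ⟨c, hcA, hc⟩ : ∃ c ∈ A, s - δ s < c :=
    exists_lt_of_lt_csSup hne (by linarith)
  have hcs : c ≤ s := le_csSup hbdd hcA
  set d := min β (s + δ s / 2) with hd
  have hsd : s ≤ d := le_min hsβ (by linarith)
  have hcd : c ≤ d := le_trans hcs hsd
  obtain ⟨Pc, hPc⟩ := hcA.2
  have hsingle : (single c d s hcs hsd).Subordinate δ := by
    apply single_sub
    intro x hx
    constructor
    · linarith [hx.1]
    · have : d ≤ s + δ s / 2 := min_le_right _ _
      have := hx.2
      linarith
  have hdA : d ∈ A := by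
    refine ⟨⟨le_trans hsα hsd, min_le_left _ _⟩, concat Pc (single c d s hcs hsd), ?_⟩
    exact concat_sub hPc hsingle
  have hds : d ≤ s := le_csSup hbdd hdA
  have hsd' : d = s := le_antisymm hds hsd
  have hsβ' : s = β := by
    by_contra hne'
    have hslt : s < β := lt_of_le_of_ne hsβ hne'
    have : d = s + δ s / 2 ∨ d = β := by
      rcases min_cases β (s + δ s / 2) with ⟨h1, _⟩ | ⟨h1, _⟩
      · exact Or.inr h1
      · exact Or.inl h1
    rcases this with h1 | h1
    · rw [hsd'] at h1; linarith
    · rw [hsd'] at h1; linarith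
  have hdβ : d = β := hsd'.trans hsβ'
  exact (hdβ ▸ hdA).2


lemma splice {a b : ℝ} (P : TaggedPartition a b) (δ : ℝ → ℝ) (g : ℝ → ℝ → ℝ → ℝ)
    (R : ∀ i, i < P.n → TaggedPartition (P.t i) (P.t (i + 1)))
    (hR : ∀ i (hi : i < P.n), (R i hi).Subordinate δ) :
    ∃ Q : TaggedPartition a b, Q.Subordinate δ ∧
      sumF Q g = ∑ i ∈ Finset.range P.n,
        (if hi : i < P.n then sumF (R i hi) g else 0) := by
  have claim : ∀ k, k ≤ P.n → ∃ Q : TaggedPartition a (P.t k), Q.Subordinate δ ∧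
      sumF Q g = ∑ i ∈ Finset.range k, (if hi : i < P.n then sumF (R i hi) g else 0) := by
    intro k
    induction k with
    | zero =>
        intro _
        rw [P.t_first]
        exact ⟨trivPart a, trivPart_sub a δ, by simp [trivPart_sumF]⟩
    | succ m ih =>
        intro hm
        obtain ⟨Qm, hQm, hQms⟩ := ih (by omega)
        have hmlt : m < P.n := hm
        refine ⟨concat Qm (R m hmlt), concat_sub hQm (hR m hmlt), ?_⟩
        rw [concat_sumF, hQms, Finset.sum_range_succ, dif_pos hmlt]
  have := claim P.n le_rfl
  rw [P.t_last] at this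
  exact this

lemma key {a b : ℝ} (hab : a ≤ b) (f : ℝ → ℝ) (E : Set ℝ) (hE : E ⊆ Set.Icc a b)
    (h : ∀ α β : ℝ, a ≤ α → α ≤ β → β ≤ b → NegCondVar α β f (E ∩ Set.Icc α β))
    (ε1 : ℝ) (hε1 : 0 < ε1) (δ : ℝ → ℝ) (hδg : IsGauge a b δ)
    (hδ : ∀ P : TaggedPartition a b, P.Subordinate δ →
      |∑ i ∈ Finset.range P.n,
        if P.tag i ∈ E then f (P.t (i + 1)) - f (P.t i) else 0| < ε1)
    (P : TaggedPartition a b) (hP : P.Subordinate δ) (S : Finset ℕ)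
    (hS : S ⊆ Finset.range P.n) :
    |∑ i ∈ S, if P.tag i ∈ E then f (P.t (i + 1)) - f (P.t i) else 0| ≤ ε1 := by
  set g : ℝ → ℝ → ℝ → ℝ := fun x u v => if x ∈ E then f v - f u else 0 with hg
  have main : ∀ η > 0, |∑ i ∈ S, g (P.tag i) (P.t i) (P.t (i + 1))| ≤ ε1 + P.n * η := by
    intro η hη
    -- gap partitions
    have hgap : ∀ i, i < P.n → ∃ Qi : TaggedPartition (P.t i) (P.t (i + 1)),
        Qi.Subordinate δ ∧ |sumF Qi g| < η := by
      intro i hi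
      have h1 : a ≤ P.t i := (t_mem_Icc P (le_of_lt hi)).1
      have h2 : P.t i ≤ P.t (i + 1) := P.t_mono i hi
      have h3 : P.t (i + 1) ≤ b := (t_mem_Icc P hi).2
      obtain ⟨δi, hδig, hδi⟩ := h (P.t i) (P.t (i + 1)) h1 h2 h3 η hη
      set γ : ℝ → ℝ := fun x => min (δ x) (δi x) with hγ
      have hγg : IsGauge (P.t i) (P.t (i + 1)) γ := by
        intro x hx
        exact lt_min (hδg x ⟨le_trans h1 hx.1, le_trans hx.2 h3⟩) (hδig x hx)
      obtain ⟨Qi, hQi⟩ := cousin _ _ h2 γ hγg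
      refine ⟨Qi, Subordinate.mono (fun x => min_le_left _ _) hQi, ?_⟩
      have hsub : Qi.Subordinate δi := Subordinate.mono (fun x => min_le_right _ _) hQi
      have hlt := hδi Qi hsub
      refine lt_of_eq_of_lt ?_ hlt
      congr 1
      apply Finset.sum_congr rfl
      intro j hj
      have hjn : j < Qi.n := Finset.mem_range.mp hj
      have htag : Qi.tag j ∈ Set.Icc (P.t i) (P.t (i + 1)) := tag_mem_Icc Qi hjn
      by_cases hjE : Qi.tag j ∈ E
      · simp [hg, hjE, htag]
      · simp [hg, hjE]
    classical
    set R : ∀ i, i < P.n → TaggedPartition (P.t i) (P.t (i + 1)) := fun i hi =>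
      if hiS : i ∈ S then
        single (P.t i) (P.t (i + 1)) (P.tag i) (P.tag_mem i hi).1 (P.tag_mem i hi).2
      else (hgap i hi).choose with hRdef
    have hR : ∀ i (hi : i < P.n), (R i hi).Subordinate δ := by
      intro i hi
      by_cases hiS : i ∈ S
      · simp only [hRdef, dif_pos hiS]
        exact single_sub _ _ _ _ _ δ (hP i hi)
      · simp only [hRdef, dif_neg hiS]
        exact (hgap i hi).choose_spec.1
    obtain ⟨Q, hQ, hQs⟩ := splice P δ g R hR
    have hfull : |sumF Q g| < ε1 := by
      have := hδ Q hQ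
      simpa [sumF, hg] using this
    set s : ℕ → ℝ := fun i => if hi : i < P.n then sumF (R i hi) g else 0 with hs
    have hSval : ∀ i ∈ S, s i = g (P.tag i) (P.t i) (P.t (i + 1)) := by
      intro i hiS
      have hi : i < P.n := Finset.mem_range.mp (hS hiS)
      simp only [hs, dif_pos hi, hRdef, dif_pos hiS]
      exact single_sumF _ _ _ _ _ g
    have hgapval : ∀ i ∈ Finset.range P.n \ S, |s i| ≤ η := by
      intro i hi
      obtain ⟨hir, hiS⟩ := Finset.mem_sdiff.mp hi
      have hilt : i < P.n := Finset.mem_range.mp hir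
      simp only [hs, dif_pos hilt, hRdef, dif_neg hiS]
      exact le_of_lt (hgap i hilt).choose_spec.2
    have hsplit : ∑ i ∈ Finset.range P.n \ S, s i + ∑ i ∈ S, s i
        = ∑ i ∈ Finset.range P.n, s i := Finset.sum_sdiff hS
    have heqS : ∑ i ∈ S, s i = ∑ i ∈ S, g (P.tag i) (P.t i) (P.t (i + 1)) :=
      Finset.sum_congr rfl hSval
    have hQs' : sumF Q g = ∑ i ∈ Finset.range P.n, s i := hQs
    calc |∑ i ∈ S, g (P.tag i) (P.t i) (P.t (i + 1))|
        = |∑ i ∈ Finset.range P.n, s i - ∑ i ∈ Finset.range P.n \ S, s i| := by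
          rw [← heqS]; congr 1; linarith [hsplit]
      _ ≤ |∑ i ∈ Finset.range P.n, s i| + |∑ i ∈ Finset.range P.n \ S, s i| :=
          abs_sub _ _
      _ ≤ ε1 + ∑ i ∈ Finset.range P.n \ S, |s i| := by
          gcongr
          · rw [← hQs']; exact le_of_lt hfull
          · exact Finset.abs_sum_le_sum_abs _ _
      _ ≤ ε1 + (Finset.range P.n \ S).card * η := by
          gcongr
          calc ∑ i ∈ Finset.range P.n \ S, |s i|
              ≤ ∑ _i ∈ Finset.range P.n \ S, η := Finset.sum_le_sum hgapval
            _ = (Finset.range P.n \ S).card * η := by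
                rw [Finset.sum_const, nsmul_eq_mul]
      _ ≤ ε1 + P.n * η := by
          have hcard : (((Finset.range P.n \ S).card : ℕ) : ℝ) ≤ P.n := by
            exact_mod_cast le_trans (Finset.card_le_card Finset.sdiff_subset)
              (le_of_eq (Finset.card_range P.n))
          have := mul_le_mul_of_nonneg_right hcard (le_of_lt hη)
          linarith
  have : |∑ i ∈ S, g (P.tag i) (P.t i) (P.t (i + 1))| ≤ ε1 := by
    apply le_of_forall_pos_le_add
    intro c hc
    have hη : (0:ℝ) < c / (P.n + 1) := by positivity
    refine le_trans (main _ hη) ?_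
    have hn : (P.n : ℝ) ≥ 0 := Nat.cast_nonneg _
    have h1 : (P.n : ℝ) / (P.n + 1) ≤ 1 := by
      rw [div_le_one (by positivity)]; linarith
    have : (P.n : ℝ) * (c / (P.n + 1)) ≤ c := by
      calc (P.n : ℝ) * (c / (P.n + 1)) = ((P.n : ℝ) / (P.n + 1)) * c := by ring
        _ ≤ 1 * c := by nlinarith
        _ = c := one_mul c
    linarith
  simpa [hg] using this

end HKAux

/-- Saks–Henstock-type lemma: if `f` has negligible conditional variation on
`E ∩ [α,β]` for every subinterval `[α,β] ⊆ [a,b]`, then `f` has negligible variation on `E`. -/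
theorem stmt2 (a b : ℝ) (hab : a ≤ b) (f : ℝ → ℝ) (E : Set ℝ) (hE : E ⊆ Set.Icc a b)
    (h : ∀ α β : ℝ, a ≤ α → α ≤ β → β ≤ b →
      NegCondVar α β f (E ∩ Set.Icc α β)) :
    NegVar a b f E := by
  intro ε hε
  have hε1 : 0 < ε / 3 := by linarith
  have hcv := h a b le_rfl hab le_rfl
  have hEeq : E ∩ Set.Icc a b = E := Set.inter_eq_left.mpr hE
  rw [hEeq] at hcv
  obtain ⟨δ, hδg, hδ⟩ := hcv (ε / 3) hε1
  refine ⟨δ, hδg, ?_⟩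
  intro P hP
  classical
  set term : ℕ → ℝ := fun i =>
    if P.tag i ∈ E then f (P.t (i + 1)) - f (P.t i) else 0 with hterm
  have habs : ∀ i ∈ Finset.range P.n,
      (if P.tag i ∈ E then |f (P.t (i + 1)) - f (P.t i)| else 0) = |term i| := by
    intro i _
    by_cases hiE : P.tag i ∈ E <;> simp [hterm, hiE]
  rw [Finset.sum_congr rfl habs]
  set Sp := (Finset.range P.n).filter (fun i => 0 ≤ term i) with hSp
  set Sm := (Finset.range P.n).filter (fun i => ¬ 0 ≤ term i) with hSm
  have hsplit : ∑ i ∈ Sp, |term i| + ∑ i ∈ Sm, |term i|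
      = ∑ i ∈ Finset.range P.n, |term i| :=
    Finset.sum_filter_add_sum_filter_not _ _ _
  have hp : ∑ i ∈ Sp, |term i| = ∑ i ∈ Sp, term i := by
    apply Finset.sum_congr rfl
    intro i hi
    exact abs_of_nonneg (Finset.mem_filter.mp hi).2
  have hm : ∑ i ∈ Sm, |term i| = -∑ i ∈ Sm, term i := by
    rw [← Finset.sum_neg_distrib]
    apply Finset.sum_congr rfl
    intro i hi
    exact abs_of_neg (lt_of_not_ge (Finset.mem_filter.mp hi).2)
  have h1 : |∑ i ∈ Sp, term i| ≤ ε / 3 :=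
    HKAux.key hab f E hE h (ε / 3) hε1 δ hδg hδ P hP Sp (Finset.filter_subset _ _)
  have h2 : |∑ i ∈ Sm, term i| ≤ ε / 3 :=
    HKAux.key hab f E hE h (ε / 3) hε1 δ hδg hδ P hP Sm (Finset.filter_subset _ _)
  have b1 : ∑ i ∈ Sp, term i ≤ ε / 3 := le_trans (le_abs_self _) h1
  have b2 : -∑ i ∈ Sm, term i ≤ ε / 3 := le_trans (neg_le_abs _) h2
  calc ∑ i ∈ Finset.range P.n, |term i|
      = ∑ i ∈ Sp, |term i| + ∑ i ∈ Sm, |term i| := hsplit.symm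
    _ ≤ ε / 3 + ε / 3 := by rw [hp, hm]; linarith
    _ < ε := by linarith
end

section
/- If f : [a,b] → ℝ satisfies f'(x) = 0 for every x in a set D ⊆ [a,b], then f has negligible variation on D. -/
open Set MeasureTheory Filter
open scoped Classical

/-- if `f' = 0` at every point of `D ⊆ [a,b]`, then `f` has negligible
variation on `D`. -/
theorem stmt3 (a b : ℝ) (hab : a ≤ b) (f : ℝ → ℝ) (D : Set ℝ) (hD : D ⊆ Set.Icc a b)
    (h : ∀ x ∈ D, HasDerivWithinAt f 0 (Set.Icc a b) x) :
    NegVar a b f D := by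
  intro ε hε
  have hden : (0:ℝ) < b - a + 1 := by linarith
  set ε' : ℝ := ε / (b - a + 1) with hε'def
  have hε' : 0 < ε' := div_pos hε hden
  have key : ∀ x ∈ D, ∃ r > 0, ∀ y ∈ Set.Icc a b, |y - x| < r → |f y - f x| ≤ ε' * |y - x| := by
    intro x hx
    have h1 := (hasDerivWithinAt_iff_isLittleO.mp (h x hx))
    simp only [smul_zero, sub_zero] at h1
    have h2 := h1.def hε'
    rw [eventually_nhdsWithin_iff, Metric.eventually_nhds_iff] at h2
    obtain ⟨r, hr, h3⟩ := h2
    refine ⟨r, hr, fun y hy hyr => ?_⟩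
    have := h3 (show dist y x < r by rwa [Real.dist_eq]) hy
    simpa [Real.norm_eq_abs] using this
  classical
  refine ⟨fun x => if hx : x ∈ D then (key x hx).choose else 1, fun x _ => ?_, ?_⟩
  · dsimp only; split
    · exact (key x ‹_›).choose_spec.1
    · exact one_pos
  intro P hP
  have hmono : ∀ i j : ℕ, i ≤ j → j ≤ P.n → P.t i ≤ P.t j := by
    intro i j hij
    induction j, hij using Nat.le_induction with
    | base => intro _; exact le_rfl
    | succ m hm ih => intro hmn; exact (ih (by omega)).trans (P.t_mono m (by omega))
    
  have hmem : ∀ j ≤ P.n, P.t j ∈ Set.Icc a b := by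
    intro j hj
    constructor
    · have h0 := hmono 0 j (Nat.zero_le _) hj; rwa [P.t_first] at h0
    · have h0 := hmono j P.n hj le_rfl; rwa [P.t_last] at h0
  have hterm : ∀ i ∈ Finset.range P.n,
      (if P.tag i ∈ D then |f (P.t (i + 1)) - f (P.t i)| else 0) ≤ ε' * (P.t (i + 1) - P.t i) := by
    intro i hi
    rw [Finset.mem_range] at hi
    have hΔ : P.t i ≤ P.t (i + 1) := P.t_mono i hi
    split
    case isTrue hx =>
      obtain ⟨hr, hspec⟩ := (key _ hx).choose_spec
      have hsub := hP i hi
      simp only [dif_pos hx] at hsub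
      have h1 : P.t i ∈ Set.Ioo (P.tag i - (key _ hx).choose) (P.tag i + (key _ hx).choose) :=
        hsub (Set.left_mem_Icc.mpr hΔ)
      have h2 : P.t (i + 1) ∈ Set.Ioo (P.tag i - (key _ hx).choose) (P.tag i + (key _ hx).choose) :=
        hsub (Set.right_mem_Icc.mpr hΔ)
      have htag := P.tag_mem i hi
      have e1 : |f (P.t i) - f (P.tag i)| ≤ ε' * |P.t i - P.tag i| := by
        apply hspec _ (hmem i (by omega))
        rw [abs_sub_lt_iff]; constructor <;> [linarith [h1.2]; linarith [h1.1]]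
      have e2 : |f (P.t (i + 1)) - f (P.tag i)| ≤ ε' * |P.t (i + 1) - P.tag i| := by
        apply hspec _ (hmem (i + 1) (by omega))
        rw [abs_sub_lt_iff]; constructor <;> [linarith [h2.2]; linarith [h2.1]]
      have a1 : |P.t i - P.tag i| = P.tag i - P.t i := by
        rw [abs_sub_comm, abs_of_nonneg]; linarith [htag.1]
      have a2 : |P.t (i + 1) - P.tag i| = P.t (i + 1) - P.tag i := by
        rw [abs_of_nonneg]; linarith [htag.2]
      calc |f (P.t (i + 1)) - f (P.t i)|
          ≤ |f (P.t (i + 1)) - f (P.tag i)| + |f (P.t i) - f (P.tag i)| := by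
            rw [abs_sub_comm (f (P.t i))]; exact abs_sub_le _ _ _
        _ ≤ ε' * |P.t (i + 1) - P.tag i| + ε' * |P.t i - P.tag i| := add_le_add e2 e1
        _ = ε' * (P.t (i + 1) - P.t i) := by rw [a1, a2]; ring
    case isFalse => exact mul_nonneg hε'.le (by linarith)
  calc (∑ i ∈ Finset.range P.n, if P.tag i ∈ D then |f (P.t (i + 1)) - f (P.t i)| else 0)
      ≤ ∑ i ∈ Finset.range P.n, ε' * (P.t (i + 1) - P.t i) := Finset.sum_le_sum hterm
    _ = ε' * (b - a) := by
        rw [← Finset.mul_sum, Finset.sum_range_sub (fun i => P.t i), P.t_first, P.t_last]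
    _ < ε' * (b - a + 1) := by nlinarith
    _ = ε := div_mul_cancel₀ ε hden.ne'
end

section
/- Let f : [a,b] → ℝ and let Z ⊆ [a,b] be a set of Lebesgue measure zero such that the symmetric upper Dini derivative D̄f(x) := limsup_{y→x} |(f(y)−f(x))/(y−x)| is finite at every x ∈ Z. Then f has negligible variation on Z. -/
open Set MeasureTheory Filter
open scoped Classical

/-!
Where the symmetric Dini derivative is finite, `f` is Lipschitz at `x` with constant `n + 1` on
the scale `1 / (n + 1)` for some `n`. A tagged interval whose tag is such a point and which is
shorter than that scale has `|Δf| ≤ (n + 1) · length`. Since `Z` is null, cover it for each `n` by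
an open set `Uₙ` with `(n + 1) λ(Uₙ) ≤ ηₙ`, where `∑ ηₙ < ε`, and let the gauge at `x ∈ Z` keep the
interval inside `U_{n(x)}`. The non-overlapping intervals whose tags have level `n` then contribute
at most `(n + 1) λ(Uₙ) ≤ ηₙ`.
-/

open Topology

def lipschitzPoints (f : ℝ → ℝ) (K ρ : ℝ) : Set ℝ :=
  {x | ∀ y, |y - x| ≤ ρ → |f y - f x| ≤ K * |y - x|}

theorem abs_sub_le_of_mem_lipschitzPoints {f : ℝ → ℝ} {K ρ x u v : ℝ}
    (hx : x ∈ lipschitzPoints f K ρ) (hux : u ≤ x) (hxv : x ≤ v) (hu : |u - x| ≤ ρ)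
    (hv : |v - x| ≤ ρ) : |f v - f u| ≤ K * (v - u) := by
  have hu' := hx u hu
  have hv' := hx v hv
  rw [abs_of_nonpos (sub_nonpos.2 hux)] at hu'
  rw [abs_of_nonneg (sub_nonneg.2 hxv)] at hv'
  calc |f v - f u| ≤ |f v - f x| + |f x - f u| := abs_sub_le _ _ _
    _ = |f v - f x| + |f u - f x| := by rw [abs_sub_comm (f x)]
    _ ≤ K * (v - x) + K * -(u - x) := add_le_add hv' hu'
    _ = K * (v - u) := by ring

theorem exists_mem_lipschitzPoints {f : ℝ → ℝ} {x : ℝ}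
    (h : ∃ M : ℝ, ∀ᶠ y in 𝓝[≠] x, |(f y - f x) / (y - x)| ≤ M) :
    ∃ n : ℕ, x ∈ lipschitzPoints f (n + 1) (1 / (n + 1)) := by
  obtain ⟨M, hM⟩ := h
  obtain ⟨ρ, hρ, hslope⟩ := Metric.eventually_nhds_iff.1 (eventually_nhdsWithin_iff.1 hM)
  obtain ⟨n, hn⟩ := exists_nat_gt (max M (1 / ρ))
  have hnρ : 1 / ((n : ℝ) + 1) < ρ :=
    (one_div_lt (by positivity) hρ).2 (by linarith [le_max_right M (1 / ρ)])
  refine ⟨n, fun y hy => ?_⟩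
  rcases eq_or_ne y x with rfl | hyx
  · simp
  have hyx' : 0 < |y - x| := abs_pos.2 (sub_ne_zero.2 hyx)
  have hMy := hslope (show dist y x < ρ by rw [Real.dist_eq]; linarith) hyx
  rw [abs_div, div_le_iff₀ hyx'] at hMy
  calc |f y - f x| ≤ M * |y - x| := hMy
    _ ≤ (n + 1) * |y - x| := by gcongr; linarith [le_max_left M (1 / ρ)]

namespace TaggedPartition

variable {a b : ℝ} (P : TaggedPartition a b)

theorem t_le_t {i j : ℕ} (hij : i ≤ j) (hj : j ≤ P.n) : P.t i ≤ P.t j := by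
  induction j, hij using Nat.le_induction with
  | base => exact le_rfl
  | succ k _ ih => exact (ih (by omega)).trans (P.t_mono k (by omega))

theorem pairwiseDisjoint_Ico {F : Finset ℕ} (hF : F ⊆ Finset.range P.n) :
    (F : Set ℕ).PairwiseDisjoint fun i => Ico (P.t i) (P.t (i + 1)) := by
  have hlt : ∀ i ∈ F, ∀ j ∈ F, i < j →
      Disjoint (Ico (P.t i) (P.t (i + 1))) (Ico (P.t j) (P.t (j + 1))) := fun i _ j hj hij =>
    disjoint_left.2 fun _ hxi hxj =>
      (hxi.2.trans_le (P.t_le_t hij (Finset.mem_range.1 (hF hj)).le)).not_ge hxj.1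
  intro i hi j hj hij
  rcases hij.lt_or_gt with h | h
  · exact hlt i hi j hj h
  · exact (hlt j hj i hi h).symm

theorem sum_sub_le_volume {F : Finset ℕ} (hF : F ⊆ Finset.range P.n) {U : Set ℝ}
    (hU : volume U ≠ ⊤) (hFU : ∀ i ∈ F, Icc (P.t i) (P.t (i + 1)) ⊆ U) :
    ∑ i ∈ F, (P.t (i + 1) - P.t i) ≤ (volume U).toReal := by
  have hlen : ∀ i ∈ F, 0 ≤ P.t (i + 1) - P.t i := fun i hi =>
    sub_nonneg.2 (P.t_mono i (Finset.mem_range.1 (hF hi)))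
  rw [← ENNReal.ofReal_le_iff_le_toReal hU, ENNReal.ofReal_sum_of_nonneg hlen]
  calc ∑ i ∈ F, ENNReal.ofReal (P.t (i + 1) - P.t i)
      = volume (⋃ i ∈ F, Ico (P.t i) (P.t (i + 1))) := by
        rw [measure_biUnion_finset (P.pairwiseDisjoint_Ico hF) fun _ _ => measurableSet_Ico]
        simp only [Real.volume_Ico]
    _ ≤ volume U :=
        measure_mono (iUnion₂_subset fun i hi => Ico_subset_Icc_self.trans (hFU i hi))

theorem sum_mul_sub_le_sum_mul_volume {s : Finset ℕ} (hs : s ⊆ Finset.range P.n) (k : ℕ → ℕ)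
    {w : ℕ → ℝ} (hw : ∀ m, 0 ≤ w m) {U : ℕ → Set ℝ} (hU : ∀ m, volume (U m) ≠ ⊤)
    (hsU : ∀ i ∈ s, Icc (P.t i) (P.t (i + 1)) ⊆ U (k i)) :
    ∑ i ∈ s, w (k i) * (P.t (i + 1) - P.t i) ≤
      ∑ m ∈ s.image k, w m * (volume (U m)).toReal := by
  rw [← Finset.sum_fiberwise_of_maps_to fun i hi => Finset.mem_image_of_mem k hi]
  refine Finset.sum_le_sum fun m _ => ?_
  rw [Finset.sum_congr rfl fun i hi => by rw [(Finset.mem_filter.1 hi).2], ← Finset.mul_sum]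
  refine mul_le_mul_of_nonneg_left ?_ (hw m)
  refine P.sum_sub_le_volume ((Finset.filter_subset _ _).trans hs) (hU m) fun i hi => ?_
  obtain ⟨his, rfl⟩ := Finset.mem_filter.1 hi
  exact hsU i his

theorem Subordinate.Icc_subset_ball {P : TaggedPartition a b} {δ : ℝ → ℝ} (hP : P.Subordinate δ)
    {i : ℕ} (hi : i < P.n) : Icc (P.t i) (P.t (i + 1)) ⊆ Metric.ball (P.tag i) (δ (P.tag i)) := by
  rw [Real.ball_eq_Ioo]
  exact hP i hi

theorem sum_abs_sub_le_of_subordinate {f : ℝ → ℝ} {E : Set ℝ} {N : ℝ → ℕ}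
    (hN : ∀ x ∈ E, x ∈ lipschitzPoints f (N x + 1) (1 / (N x + 1))) {U : ℕ → Set ℝ}
    (hU : ∀ m, volume (U m) ≠ ⊤) {r : ℝ → ℝ} (hr : ∀ x ∈ E, Metric.ball x (r x) ⊆ U (N x))
    (hP : P.Subordinate fun x => min (1 / (N x + 1)) (r x)) :
    (∑ i ∈ Finset.range P.n, if P.tag i ∈ E then |f (P.t (i + 1)) - f (P.t i)| else 0) ≤
      ∑ m ∈ ((Finset.range P.n).filter (P.tag · ∈ E)).image (N ∘ P.tag),
        ((m : ℝ) + 1) * (volume (U m)).toReal := by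
  have hs : ∀ i ∈ (Finset.range P.n).filter (P.tag · ∈ E), i < P.n ∧ P.tag i ∈ E :=
    fun i hi => by simpa using hi
  rw [← Finset.sum_filter]
  refine le_trans (Finset.sum_le_sum fun i hi => ?_) <|
    P.sum_mul_sub_le_sum_mul_volume (Finset.filter_subset _ _) (N ∘ P.tag)
      (w := fun m => (m : ℝ) + 1) (fun m => by positivity) hU fun i hi => ?_
  · obtain ⟨hin, hiE⟩ := hs i hi
    have hball := (hP.Icc_subset_ball hin).trans (Metric.ball_subset_ball (min_le_left _ _))
    have hl := hball (left_mem_Icc.2 (P.t_mono i hin))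
    have hr := hball (right_mem_Icc.2 (P.t_mono i hin))
    rw [Metric.mem_ball, Real.dist_eq] at hl hr
    exact abs_sub_le_of_mem_lipschitzPoints (hN _ hiE) (P.tag_mem i hin).1 (P.tag_mem i hin).2
      hl.le hr.le
  · obtain ⟨hin, hiE⟩ := hs i hi
    exact (hP.Icc_subset_ball hin).trans
      ((Metric.ball_subset_ball (min_le_right _ _)).trans (hr _ hiE))

end TaggedPartition

theorem stmt4_general (a b : ℝ) (f : ℝ → ℝ) (Z : Set ℝ)
    (hnull : MeasureTheory.volume Z = 0)
    (hdini : ∀ x ∈ Z, ∃ M : ℝ, ∀ᶠ y in nhdsWithin x {x}ᶜ, |(f y - f x) / (y - x)| ≤ M) :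
    NegVar a b f Z := by
  intro ε hε
  choose! N hN using fun x (hx : x ∈ Z) => exists_mem_lipschitzPoints (hdini x hx)
  obtain ⟨η, hη, c, hηc, hcε⟩ :=
    NNReal.exists_pos_sum_of_countable (Real.toNNReal_pos.2 hε).ne' ℕ
  have hUex : ∀ m : ℕ, ∃ U ⊇ Z, IsOpen U ∧ volume U < ENNReal.ofReal (η m / (m + 1)) :=
    fun m => Z.exists_isOpen_lt_of_lt _
      (hnull ▸ ENNReal.ofReal_pos.2 (div_pos (NNReal.coe_pos.2 (hη m)) (by positivity)))
  choose U hZU hUo hUη using hUex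
  have hr : ∀ x, ∃ r > 0, x ∈ Z → Metric.ball x r ⊆ U (N x) := fun x => by
    by_cases hx : x ∈ Z
    · obtain ⟨r, hr, hrU⟩ := Metric.isOpen_iff.1 (hUo (N x)) x (hZU _ hx)
      exact ⟨r, hr, fun _ => hrU⟩
    · exact ⟨1, one_pos, fun h => absurd h hx⟩
  choose r hr0 hrU using hr
  refine ⟨fun x => min (1 / (N x + 1)) (r x), fun x _ => lt_min (by positivity) (hr0 x),
    fun P hP => ?_⟩
  calc _ ≤ _ := P.sum_abs_sub_le_of_subordinate hN (fun m => (hUη m).ne_top) hrU hP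
    _ ≤ ∑ m ∈ _, (η m : ℝ) := Finset.sum_le_sum fun m _ =>
        (le_div_iff₀' (by positivity)).1
          (ENNReal.toReal_le_of_le_ofReal (by positivity) (hUη m).le)
    _ ≤ c := sum_le_hasSum _ (fun m _ => (η m).2) (NNReal.hasSum_coe.2 hηc)
    _ < ε := Real.lt_toNNReal_iff_coe_lt.1 hcε

/-- if `Z ⊆ [a,b]` is null and the symmetric upper Dini derivative of `f`
is finite at every point of `Z`, then `f` has negligible variation on `Z`. -/
theorem stmt4 (a b : ℝ) (hab : a ≤ b) (f : ℝ → ℝ) (Z : Set ℝ) (hZ : Z ⊆ Set.Icc a b)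
    (hnull : MeasureTheory.volume Z = 0)
    (hdini : ∀ x ∈ Z, ∃ M : ℝ, ∀ᶠ y in nhdsWithin x {x}ᶜ, |(f y - f x) / (y - x)| ≤ M) :
    NegVar a b f Z :=
  stmt4_general a b f Z hnull hdini
end

section
/- If g : [a,b] → ℝ has negligible variation on E ⊆ [a,b], then the symmetric upper Dini derivative D̄g(x) := limsup_{y→x} |(g(y)−g(x))/(y−x)| equals 0 for almost every x ∈ E. -/
open Set MeasureTheory Filter
open scoped Classical

/-!
Off the endpoints, a point of `E` where `|(g y - g x) / (y - x)|` does not tend to `0` has, for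
some `c > 0`, arbitrarily short intervals `[p, q] ∋ x` with `c (q - p) ≤ |g q - g p|`. Those that
are fine for the gauge `δ` of the negligible-variation condition with bound `c ε` form a Vitali
cover of the set of such points. A finite disjoint subfamily extends, by Cousin's lemma on the
gaps, to a `δ`-fine tagged partition of `[a, b]`, so its total length is less than `ε`. By the
Vitali covering theorem the set has measure at most `ε`, for every `ε > 0`.
-/

open scoped Topology NNReal ENNReal

theorem IsGauge.mono {a b u v : ℝ} {δ : ℝ → ℝ} (h : IsGauge a b δ) (huv : Icc u v ⊆ Icc a b) :
    IsGauge u v δ :=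
  fun x hx => h x (huv hx)

namespace TaggedPartition

variable {u m v : ℝ}

def sum (P : TaggedPartition u v) (f : ℝ → ℝ → ℝ → ℝ) : ℝ :=
  ∑ i ∈ Finset.range P.n, f (P.tag i) (P.t i) (P.t (i + 1))

def point (u : ℝ) : TaggedPartition u u where
  n := 0
  t _ := u
  tag _ := u
  t_first := rfl
  t_last := rfl
  t_mono _ h := absurd h (Nat.not_lt_zero _)
  tag_mem _ h := absurd h (Nat.not_lt_zero _)

theorem subordinate_point (u : ℝ) (δ : ℝ → ℝ) : (point u).Subordinate δ :=
  fun _ h => absurd h (Nat.not_lt_zero _)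

def single (u v τ : ℝ) (hτ : τ ∈ Icc u v) : TaggedPartition u v where
  n := 1
  t i := if i = 0 then u else v
  tag _ := τ
  t_first := rfl
  t_last := rfl
  t_mono i h := by
    obtain rfl : i = 0 := Nat.lt_one_iff.1 h
    simpa using hτ.1.trans hτ.2
  tag_mem i h := by
    obtain rfl : i = 0 := Nat.lt_one_iff.1 h
    simpa using hτ

theorem subordinate_single {u v τ : ℝ} {hτ : τ ∈ Icc u v} {δ : ℝ → ℝ}
    (h : Icc u v ⊆ Ioo (τ - δ τ) (τ + δ τ)) : (single u v τ hτ).Subordinate δ := by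
  intro i hi
  obtain rfl : i = 0 := Nat.lt_one_iff.1 hi
  simpa [single] using h

@[simp]
theorem sum_single (u v τ : ℝ) (hτ : τ ∈ Icc u v) (f : ℝ → ℝ → ℝ → ℝ) :
    (single u v τ hτ).sum f = f τ u v := by
  simp [sum, single]

section Append

variable (P : TaggedPartition u m) (Q : TaggedPartition m v)

def appendPoints (i : ℕ) : ℝ := if i ≤ P.n then P.t i else Q.t (i - P.n)

def appendTags (i : ℕ) : ℝ := if i < P.n then P.tag i else Q.tag (i - P.n)

theorem appendPoints_of_le {i : ℕ} (h : i ≤ P.n) : appendPoints P Q i = P.t i := if_pos h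

theorem appendPoints_add (j : ℕ) : appendPoints P Q (P.n + j) = Q.t j := by
  rcases j.eq_zero_or_pos with rfl | hj
  · rw [appendPoints, if_pos (by omega), add_zero, P.t_last, Q.t_first]
  · rw [appendPoints, if_neg (by omega), Nat.add_sub_cancel_left]

theorem appendTags_of_lt {i : ℕ} (h : i < P.n) : appendTags P Q i = P.tag i := if_pos h

theorem appendTags_add (j : ℕ) : appendTags P Q (P.n + j) = Q.tag j := by
  rw [appendTags, if_neg (by omega), Nat.add_sub_cancel_left]

theorem forall_append_interval {p : ℝ → ℝ → ℝ → Prop}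
    (hP : ∀ i < P.n, p (P.tag i) (P.t i) (P.t (i + 1)))
    (hQ : ∀ j < Q.n, p (Q.tag j) (Q.t j) (Q.t (j + 1))) :
    ∀ i < P.n + Q.n, p (appendTags P Q i) (appendPoints P Q i) (appendPoints P Q (i + 1)) := by
  intro i hi
  rcases lt_or_ge i P.n with h | h
  · rw [appendTags_of_lt P Q h, appendPoints_of_le P Q h.le, appendPoints_of_le P Q h]
    exact hP i h
  · obtain ⟨j, rfl⟩ := Nat.exists_eq_add_of_le h
    rw [appendTags_add, appendPoints_add, add_assoc, appendPoints_add]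
    exact hQ j (by omega)

def append : TaggedPartition u v where
  n := P.n + Q.n
  t := appendPoints P Q
  tag := appendTags P Q
  t_first := by rw [appendPoints_of_le P Q (Nat.zero_le _), P.t_first]
  t_last := by rw [appendPoints_add, Q.t_last]
  t_mono := forall_append_interval P Q (p := fun _ s t => s ≤ t) P.t_mono Q.t_mono
  tag_mem := forall_append_interval P Q (p := fun τ s t => τ ∈ Icc s t) P.tag_mem Q.tag_mem

variable {P Q}

theorem Subordinate.append {δ : ℝ → ℝ} (hP : P.Subordinate δ) (hQ : Q.Subordinate δ) :
    (P.append Q).Subordinate δ :=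
  forall_append_interval P Q (p := fun τ s t => Icc s t ⊆ Ioo (τ - δ τ) (τ + δ τ)) hP hQ

variable (P Q)

theorem sum_append (f : ℝ → ℝ → ℝ → ℝ) : (P.append Q).sum f = P.sum f + Q.sum f := by
  change ∑ i ∈ Finset.range (P.n + Q.n),
      f (appendTags P Q i) (appendPoints P Q i) (appendPoints P Q (i + 1)) = _
  rw [Finset.sum_range_add]
  congr 1
  · refine Finset.sum_congr rfl fun i hi => ?_
    have hi : i < P.n := Finset.mem_range.1 hi
    rw [appendTags_of_lt P Q hi, appendPoints_of_le P Q hi.le, appendPoints_of_le P Q hi]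
  · refine Finset.sum_congr rfl fun j _ => ?_
    rw [appendTags_add, appendPoints_add, add_assoc, appendPoints_add]

end Append

theorem sum_nonneg (P : TaggedPartition u v) {f : ℝ → ℝ → ℝ → ℝ} (hf : ∀ τ s t, 0 ≤ f τ s t) :
    0 ≤ P.sum f :=
  Finset.sum_nonneg fun _ _ => hf _ _ _

/-- Cousin's lemma. -/
theorem exists_subordinate (huv : u ≤ v) {δ : ℝ → ℝ} (hδ : IsGauge u v δ) :
    ∃ P : TaggedPartition u v, P.Subordinate δ := by
  set S := {x ∈ Icc u v | ∃ P : TaggedPartition u x, P.Subordinate δ}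
  have hS : BddAbove S := ⟨v, fun x hx => hx.1.2⟩
  have huS : u ∈ S := ⟨left_mem_Icc.2 huv, point u, subordinate_point u δ⟩
  set s := sSup S
  have hs : s ∈ Icc u v := ⟨le_csSup hS huS, csSup_le ⟨u, huS⟩ fun x hx => hx.1.2⟩
  have hδs : 0 < δ s := hδ s hs
  obtain ⟨x, hxS, hsx⟩ := exists_lt_of_lt_csSup ⟨u, huS⟩ (sub_lt_self s hδs)
  have hxs : x ≤ s := le_csSup hS hxS
  obtain ⟨⟨hux, -⟩, P, hP⟩ := hxS
  -- Appending `[x, w]` tagged at `s` reaches `w`, and `w ≤ sSup S = s` forces `w = v`.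
  set w := min v (s + δ s / 2) with hw_def
  have hsw : s ≤ w := le_min hs.2 (by linarith)
  have hwS : w ∈ S := by
    refine ⟨⟨hux.trans (hxs.trans hsw), min_le_left _ _⟩,
      P.append (single x w s ⟨hxs, hsw⟩), hP.append (subordinate_single ?_)⟩
    exact Icc_subset_Ioo hsx ((min_le_right _ _).trans_lt (by linarith))
  have hws : w ≤ s := le_csSup hS hwS
  rcases min_choice v (s + δ s / 2) with hw | hw
  · exact hw ▸ hwS.2
  · linarith [hw_def ▸ hw]

end TaggedPartition

theorem uIcc_subset_Ioo_of_abs_sub_lt {x y ρ : ℝ} (h : |y - x| < ρ) :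
    uIcc x y ⊆ Ioo (x - ρ) (x + ρ) := by
  rw [← Real.ball_eq_Ioo]
  exact fun w hw => (abs_sub_left_of_mem_uIcc hw).trans_lt h

structure TaggedInterval where
  tag : ℝ
  left : ℝ
  right : ℝ
  left_lt_right : left < right
  tag_mem : tag ∈ Icc left right

namespace TaggedInterval

def Subordinate (z : TaggedInterval) (δ : ℝ → ℝ) : Prop :=
  Icc z.left z.right ⊆ Ioo (z.tag - δ z.tag) (z.tag + δ z.tag)

def ofNe {x y : ℝ} (h : x ≠ y) : TaggedInterval where
  tag := x
  left := min x y
  right := max x y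
  left_lt_right := min_lt_max.2 h
  tag_mem := ⟨min_le_left _ _, le_max_left _ _⟩

section ofNe

variable {x y : ℝ} (h : x ≠ y)

theorem length_ofNe : (ofNe h).right - (ofNe h).left = |x - y| := max_sub_min_eq_abs' x y

theorem abs_sub_ofNe (φ : ℝ → ℝ) : |φ (ofNe h).right - φ (ofNe h).left| = |φ y - φ x| := by
  rcases le_total x y with hxy | hxy
  · simp [ofNe, hxy]
  · simp [ofNe, hxy, abs_sub_comm]

end ofNe

theorem exists_of_frequently {x c ρ : ℝ} {g : ℝ → ℝ} (hρ : 0 < ρ)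
    (hfreq : ∃ᶠ y in 𝓝[≠] x, c * |y - x| ≤ |g y - g x|) :
    ∃ z : TaggedInterval, z.tag = x ∧ z.right - z.left < ρ ∧
      Icc z.left z.right ⊆ Ioo (x - ρ) (x + ρ) ∧ c * (z.right - z.left) ≤ |g z.right - g z.left| := by
  have hnear : ∀ᶠ y in 𝓝[≠] x, y ≠ x ∧ |y - x| < ρ :=
    eventually_mem_nhdsWithin.and (nhdsWithin_le_nhds (Metric.ball_mem_nhds x hρ))
  obtain ⟨y, hy, hyx, hyρ⟩ := (hfreq.and_eventually hnear).exists
  refine ⟨.ofNe hyx.symm, rfl, ?_, ?_, ?_⟩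
  · rwa [length_ofNe, abs_sub_comm]
  · exact uIcc_subset_Ioo_of_abs_sub_lt hyρ
  · rwa [length_ofNe, abs_sub_ofNe, abs_sub_comm]

theorem volume_le_of_fine_cover {A : Set ℝ} {T : Set TaggedInterval} {L : ℝ}
    (hfine : ∀ x ∈ A, ∀ r > 0, ∃ z ∈ T, z.right - z.left ≤ r ∧ z.tag = x)
    (hsum : ∀ F : Finset TaggedInterval, ↑F ⊆ T →
      (F : Set TaggedInterval).PairwiseDisjoint (fun z => Icc z.left z.right) →
        ∑ z ∈ F, (z.right - z.left) ≤ L) :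
    volume A ≤ ENNReal.ofReal L := by
  obtain ⟨U, hUT, hU, hUdisj, hAU⟩ := Vitali.exists_disjoint_covering_ae volume A T 6
    (fun z => z.right - z.left) (·.tag) (fun z => Icc z.left z.right)
    (fun z _ _ hw => Real.dist_le_of_mem_Icc hw z.tag_mem)
    (fun z _ => by
      rw [Real.volume_closedBall, Real.volume_Icc, show ((6 : ℝ≥0) : ℝ≥0∞) = .ofReal 6 by simp,
        ← ENNReal.ofReal_mul (by norm_num)]
      exact ENNReal.ofReal_le_ofReal (by linarith))
    (fun z _ => by simpa using z.left_lt_right)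
    (fun _ _ => isClosed_Icc) hfine
  calc volume A ≤ volume (⋃ z ∈ U, Icc z.left z.right) := measure_mono_ae (ae_le_set.2 hAU)
    _ ≤ ∑' z : U, volume (Icc (z : TaggedInterval).left (z : TaggedInterval).right) :=
      measure_biUnion_le volume hU _
    _ ≤ ENNReal.ofReal L := by
      refine ENNReal.summable.tsum_le_of_sum_le fun s => ?_
      have hsT : ↑(s.map (Function.Embedding.subtype _)) ⊆ T := by
        intro z hz
        obtain ⟨w, -, rfl⟩ := Finset.mem_map.1 hz
        exact hUT w.2
      have hsdisj : (↑(s.map (Function.Embedding.subtype _)) : Set TaggedInterval).PairwiseDisjoint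
          (fun z => Icc z.left z.right) :=
        hUdisj.subset fun z hz => by
          obtain ⟨w, -, rfl⟩ := Finset.mem_map.1 hz
          exact w.2
      calc ∑ z ∈ s, volume (Icc (z : TaggedInterval).left (z : TaggedInterval).right)
          = ENNReal.ofReal (∑ z ∈ s.map (Function.Embedding.subtype _),
              (z.right - z.left)) := by
            rw [ENNReal.ofReal_sum_of_nonneg fun z _ => sub_nonneg.2 z.left_lt_right.le,
              Finset.sum_map]
            simp only [Real.volume_Icc, Function.Embedding.subtype_apply]
        _ ≤ ENNReal.ofReal L := ENNReal.ofReal_le_ofReal (hsum _ hsT hsdisj)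

end TaggedInterval

theorem TaggedPartition.exists_subordinate_sum_le {u v : ℝ} (huv : u ≤ v) {δ : ℝ → ℝ}
    (hδ : IsGauge u v δ) {f : ℝ → ℝ → ℝ → ℝ} (hf : ∀ τ s t, 0 ≤ f τ s t)
    (F : Finset TaggedInterval) (hFuv : ∀ z ∈ F, Icc z.left z.right ⊆ Icc u v)
    (hFδ : ∀ z ∈ F, z.Subordinate δ)
    (hFdisj : (F : Set TaggedInterval).PairwiseDisjoint fun z => Icc z.left z.right) :
    ∃ P : TaggedPartition u v, P.Subordinate δ ∧ ∑ z ∈ F, f z.tag z.left z.right ≤ P.sum f := by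
  induction F using Finset.induction_on_min_value (f := TaggedInterval.left) generalizing u with
  | empty =>
    obtain ⟨P, hP⟩ := TaggedPartition.exists_subordinate huv hδ
    exact ⟨P, hP, by simpa using P.sum_nonneg hf⟩
  | insert z F hzF hz_min ih =>
    have hz := hFuv z (Finset.mem_insert_self z F)
    rw [Icc_subset_Icc_iff z.left_lt_right.le] at hz
    have hF_right : ∀ w ∈ F, z.right < w.left := by
      intro w hw
      by_contra! hwz
      have hdisj := hFdisj (Finset.mem_insert_self z F) (Finset.mem_insert_of_mem hw)
        (ne_of_mem_of_not_mem hw hzF).symm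
      exact Set.disjoint_left.1 hdisj ⟨hz_min w hw, hwz⟩ (left_mem_Icc.2 w.left_lt_right.le)
    obtain ⟨P₂, hP₂, hsum₂⟩ := ih hz.2 (hδ.mono (Icc_subset_Icc_left (hz.1.trans
        z.left_lt_right.le)))
      (fun w hw => Icc_subset_Icc (hF_right w hw).le
        ((Icc_subset_Icc_iff w.left_lt_right.le).1 (hFuv w (Finset.mem_insert_of_mem hw))).2)
      (fun w hw => hFδ w (Finset.mem_insert_of_mem hw))
      (hFdisj.subset (Finset.coe_subset.2 (Finset.subset_insert z F)))
    obtain ⟨P₁, hP₁⟩ := TaggedPartition.exists_subordinate hz.1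
      (hδ.mono (Icc_subset_Icc_right (z.left_lt_right.le.trans hz.2)))
    refine ⟨(P₁.append (.single _ _ _ z.tag_mem)).append P₂,
      (hP₁.append (TaggedPartition.subordinate_single (hFδ z (Finset.mem_insert_self z F)))).append
        hP₂, ?_⟩
    rw [Finset.sum_insert hzF, TaggedPartition.sum_append, TaggedPartition.sum_append,
      TaggedPartition.sum_single]
    linarith [P₁.sum_nonneg hf]

theorem NegVar.volume_frequently_mul_abs_sub_le_eq_zero {a b : ℝ} {g : ℝ → ℝ} {E : Set ℝ}
    (h : NegVar a b g E) {c : ℝ} (hc : 0 < c) :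
    volume {x ∈ E ∩ Ioo a b | ∃ᶠ y in 𝓝[≠] x, c * |y - x| ≤ |g y - g x|} = 0 := by
  set A := {x ∈ E ∩ Ioo a b | ∃ᶠ y in 𝓝[≠] x, c * |y - x| ≤ |g y - g x|}
  rcases lt_or_ge b a with hba | hab
  · simp [A, Ioo_eq_empty_of_le hba.le]
  suffices hA : ∀ η > 0, volume A ≤ ENNReal.ofReal η by
    refine nonpos_iff_eq_zero.1 (ENNReal.le_of_forall_pos_le_add fun η hη _ => ?_)
    simpa using hA η hη
  intro η hη
  obtain ⟨δ, hδ, hδvar⟩ := h (c * η) (by positivity)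
  set T := {z : TaggedInterval | z.tag ∈ A ∧ Icc z.left z.right ⊆ Icc a b ∧ z.Subordinate δ ∧
    c * (z.right - z.left) ≤ |g z.right - g z.left|}
  refine TaggedInterval.volume_le_of_fine_cover (T := T) ?_ ?_
  · rintro x hxA r hr
    obtain ⟨⟨-, hxab⟩, hfreq⟩ := id hxA
    set ρ := min (min r (δ x)) (min (x - a) (b - x))
    have hρ : 0 < ρ := lt_min (lt_min hr (hδ x (Ioo_subset_Icc_self hxab)))
      (lt_min (sub_pos.2 hxab.1) (sub_pos.2 hxab.2))
    have hρr : ρ ≤ r := (min_le_left _ _).trans (min_le_left _ _)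
    have hρδ : ρ ≤ δ x := (min_le_left _ _).trans (min_le_right _ _)
    have hρa : ρ ≤ x - a := (min_le_right _ _).trans (min_le_left _ _)
    have hρb : ρ ≤ b - x := (min_le_right _ _).trans (min_le_right _ _)
    obtain ⟨z, rfl, hzρ, hzx, hzg⟩ := TaggedInterval.exists_of_frequently hρ hfreq
    refine ⟨z, ⟨hxA, ?_, ?_, hzg⟩, by linarith, rfl⟩
    · exact hzx.trans (Ioo_subset_Icc_self.trans (Icc_subset_Icc (by linarith) (by linarith)))
    · exact hzx.trans (Ioo_subset_Ioo (by linarith) (by linarith))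
  · intro F hFT hFdisj
    obtain ⟨P, hP, hPsum⟩ := TaggedPartition.exists_subordinate_sum_le hab hδ
      (f := fun τ s t => if τ ∈ E then |g t - g s| else 0)
      (fun _ _ _ => ite_nonneg (abs_nonneg _) le_rfl) F
      (fun z hz => (hFT hz).2.1) (fun z hz => (hFT hz).2.2.1) hFdisj
    have hcF : c * ∑ z ∈ F, (z.right - z.left) < c * η := calc
      c * ∑ z ∈ F, (z.right - z.left) = ∑ z ∈ F, c * (z.right - z.left) := Finset.mul_sum _ _ _
      _ ≤ ∑ z ∈ F, (if z.tag ∈ E then |g z.right - g z.left| else 0) :=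
        Finset.sum_le_sum fun z hz => by
          rw [if_pos (hFT hz).1.1.1]
          exact (hFT hz).2.2.2
      _ ≤ P.sum fun τ s t => if τ ∈ E then |g t - g s| else 0 := hPsum
      _ < c * η := hδvar P hP
    exact (lt_of_mul_lt_mul_left hcF hc.le).le

theorem exists_nat_frequently_mul_abs_sub_le {f : ℝ → ℝ} {x : ℝ}
    (h : ¬ Tendsto (fun y => |(f y - f x) / (y - x)|) (𝓝[≠] x) (𝓝 0)) :
    ∃ n : ℕ, ∃ᶠ y in 𝓝[≠] x, 1 / ((n : ℝ) + 1) * |y - x| ≤ |f y - f x| := by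
  rw [Metric.tendsto_nhds] at h
  push Not at h
  obtain ⟨ε, hε, hfreq⟩ := h
  obtain ⟨n, hn⟩ := exists_nat_one_div_lt hε
  refine ⟨n, (hfreq.and_eventually eventually_mem_nhdsWithin).mono fun y ⟨hy, hyx⟩ => ?_⟩
  have hyx : 0 < |y - x| := abs_pos.2 (sub_ne_zero.2 hyx)
  rw [Real.dist_eq, sub_zero, abs_abs, abs_div, le_div_iff₀ hyx] at hy
  exact (mul_le_mul_of_nonneg_right hn.le hyx.le).trans hy

/-- if `g` has negligible variation on `E`, then the symmetric upper Dini
derivative of `g` is `0` at almost every point of `E`. -/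
theorem stmt5 (a b : ℝ) (g : ℝ → ℝ) (E : Set ℝ) (hE : E ⊆ Set.Icc a b)
    (h : NegVar a b g E) :
    MeasureTheory.volume {x ∈ E | ¬ Filter.Tendsto (fun y => |(g y - g x) / (y - x)|)
      (nhdsWithin x {x}ᶜ) (nhds 0)} = 0 := by
  have hsub : {x ∈ E | ¬ Tendsto (fun y => |(g y - g x) / (y - x)|) (𝓝[≠] x) (𝓝 0)} ⊆
      {a, b} ∪ ⋃ n : ℕ,
        {x ∈ E ∩ Ioo a b | ∃ᶠ y in 𝓝[≠] x, 1 / ((n : ℝ) + 1) * |y - x| ≤ |g y - g x|} := by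
    rintro x ⟨hxE, hx⟩
    rcases eq_endpoints_or_mem_Ioo_of_mem_Icc (hE hxE) with rfl | rfl | hxab
    · exact Or.inl (mem_insert _ _)
    · exact Or.inl (mem_insert_of_mem _ rfl)
    · obtain ⟨n, hn⟩ := exists_nat_frequently_mul_abs_sub_le hx
      exact Or.inr (mem_iUnion.2 ⟨n, ⟨hxE, hxab⟩, hn⟩)
  refine measure_mono_null hsub (measure_union_null ((toFinite _).measure_zero _) ?_)
  exact measure_iUnion_null fun n => h.volume_frequently_mul_abs_sub_le_eq_zero (by positivity)
end

section
/- Let g : [a,b] → ℝ be differentiable almost everywhere. Then g' is Henstock–Kurzweil integrable on [a,b] with g(b) − g(a) = (HK)∫_a^b g'(s) ds if and only if g has negligible conditional variation on the set of points where g is not differentiable. -/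
open Set MeasureTheory Filter
open scoped Classical

theorem point_straddle {g : ℝ → ℝ} {x : ℝ} (hx : DifferentiableAt ℝ g x) {ε : ℝ} (hε : 0 < ε) :
    ∃ d > 0, ∀ u v : ℝ, u ≤ x → x ≤ v → x - d < u → v < x + d →
      |g v - g u - deriv g x * (v - u)| ≤ ε * (v - u) := by
  have h := hx.hasDerivAt
  rw [hasDerivAt_iff_isLittleO] at h
  have h2 := h.def hε
  rw [Metric.eventually_nhds_iff] at h2
  obtain ⟨d, hd, hball⟩ := h2
  refine ⟨d, hd, fun u v hu hv hu' hv' => ?_⟩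
  have hub : dist u x < d := by rw [Real.dist_eq, abs_of_nonpos (by linarith)]; linarith
  have hvb : dist v x < d := by rw [Real.dist_eq, abs_of_nonneg (by linarith)]; linarith
  have h1 := hball hub
  have h2 := hball hvb
  simp only [Real.norm_eq_abs, smul_eq_mul] at h1 h2
  have hua : |u - x| = x - u := by rw [abs_of_nonpos (by linarith)]; ring
  have hva : |v - x| = v - x := abs_of_nonneg (by linarith)
  rw [hua] at h1
  rw [hva] at h2
  rw [abs_le] at h1 h2 ⊢
  constructor <;> nlinarith [h1.1, h1.2, h2.1, h2.2]

lemma TaggedPartition.t_le {a b : ℝ} (P : TaggedPartition a b) {i j : ℕ}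
    (hij : i ≤ j) (hj : j ≤ P.n) : P.t i ≤ P.t j := by
  induction j with
  | zero => simp_all
  | succ k ih =>
    rcases Nat.eq_or_lt_of_le hij with h | h
    · exact h ▸ le_refl _
    · exact (ih (Nat.lt_succ_iff.mp h) (le_of_lt (Nat.lt_of_lt_of_le (Nat.lt_succ_self k) hj))).trans
        (P.t_mono k (Nat.lt_of_lt_of_le (Nat.lt_succ_self k) hj))

lemma TaggedPartition.tag_mem_Icc {a b : ℝ} (P : TaggedPartition a b) {i : ℕ} (hi : i < P.n) :
    P.tag i ∈ Set.Icc a b := by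
  obtain ⟨h1, h2⟩ := P.tag_mem i hi
  constructor
  · calc a = P.t 0 := P.t_first.symm
      _ ≤ P.t i := P.t_le (Nat.zero_le i) (le_of_lt hi)
      _ ≤ P.tag i := h1
  · calc P.tag i ≤ P.t (i+1) := h2
      _ ≤ P.t P.n := P.t_le hi (le_refl _)
      _ = b := P.t_last

lemma TaggedPartition.subordinate_of_le {a b : ℝ} (P : TaggedPartition a b) {δ δ' : ℝ → ℝ}
    (h : ∀ x, δ x ≤ δ' x) (hP : P.Subordinate δ) : P.Subordinate δ' := fun i hi =>
  (hP i hi).trans (Set.Ioo_subset_Ioo (by linarith [h (P.tag i)]) (by linarith [h (P.tag i)]))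

lemma key_estimate (a b : ℝ) (g : ℝ → ℝ) (E : Set ℝ)
    (hE : ∀ x, x ∈ E ↔ x ∈ Set.Icc a b ∧ ¬ DifferentiableAt ℝ g x) {ε : ℝ} (hε : 0 < ε) :
    ∃ δ : ℝ → ℝ, (∀ x, 0 < δ x) ∧ ∀ P : TaggedPartition a b, P.Subordinate δ →
      |(∑ i ∈ Finset.range P.n,
          (if DifferentiableAt ℝ g (P.tag i) then deriv g (P.tag i) else 0) * (P.t (i + 1) - P.t i))
        - (g b - g a)
        + ∑ i ∈ Finset.range P.n,
          (if P.tag i ∈ E then g (P.t (i + 1)) - g (P.t i) else 0)|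
      ≤ ε * (b - a) := by
  have hch : ∀ x : ℝ, ∃ d : ℝ, 0 < d ∧ (DifferentiableAt ℝ g x → ∀ u v : ℝ,
      u ≤ x → x ≤ v → x - d < u → v < x + d →
      |g v - g u - deriv g x * (v - u)| ≤ ε * (v - u)) := by
    intro x
    by_cases hx : DifferentiableAt ℝ g x
    · obtain ⟨d, hd, hp⟩ := point_straddle hx hε
      exact ⟨d, hd, fun _ => hp⟩
    · exact ⟨1, one_pos, fun h => absurd h hx⟩
  choose δ hδpos hδ using hch
  refine ⟨δ, hδpos, fun P hP => ?_⟩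
  have htel : g b - g a = ∑ i ∈ Finset.range P.n, (g (P.t (i+1)) - g (P.t i)) := by
    rw [Finset.sum_range_sub (fun i => g (P.t i)), P.t_last, P.t_first]
  rw [htel, ← Finset.sum_sub_distrib, ← Finset.sum_add_distrib]
  have hbound : ∀ i ∈ Finset.range P.n,
      |(if DifferentiableAt ℝ g (P.tag i) then deriv g (P.tag i) else 0) * (P.t (i + 1) - P.t i)
        - (g (P.t (i+1)) - g (P.t i))
        + (if P.tag i ∈ E then g (P.t (i + 1)) - g (P.t i) else 0)|
      ≤ ε * (P.t (i+1) - P.t i) := by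
    intro i hi
    rw [Finset.mem_range] at hi
    have hΔ := P.t_mono i hi
    have hsub := hP i hi
    have hlo := hsub (Set.left_mem_Icc.mpr hΔ)
    have hhi := hsub (Set.right_mem_Icc.mpr hΔ)
    have htg := P.tag_mem i hi
    by_cases hd : DifferentiableAt ℝ g (P.tag i)
    · have hnotE : P.tag i ∉ E := fun h => ((hE _).mp h).2 hd
      rw [if_pos hd, if_neg hnotE, add_zero]
      calc |deriv g (P.tag i) * (P.t (i+1) - P.t i) - (g (P.t (i+1)) - g (P.t i))|
          = |g (P.t (i+1)) - g (P.t i) - deriv g (P.tag i) * (P.t (i+1) - P.t i)| :=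
            abs_sub_comm _ _
        _ ≤ ε * (P.t (i+1) - P.t i) :=
            hδ (P.tag i) hd (P.t i) (P.t (i+1)) htg.1 htg.2 hlo.1 hhi.2
    · have hmE : P.tag i ∈ E := (hE _).mpr ⟨P.tag_mem_Icc hi, hd⟩
      rw [if_neg hd, if_pos hmE, zero_mul]
      have hz : (0:ℝ) - (g (P.t (i+1)) - g (P.t i)) + (g (P.t (i+1)) - g (P.t i)) = 0 := by ring
      rw [hz, abs_zero]
      exact mul_nonneg hε.le (by linarith)
  calc |∑ i ∈ Finset.range P.n, _| ≤ ∑ i ∈ Finset.range P.n, ε * (P.t (i+1) - P.t i) :=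
        (Finset.abs_sum_le_sum_abs _ _).trans (Finset.sum_le_sum hbound)
    _ = ε * (b - a) := by
        rw [← Finset.mul_sum, Finset.sum_range_sub (fun i => P.t i), P.t_last, P.t_first]

/-- Fundamental Theorem of Calculus for the HK integral, single interval:
for `g` differentiable a.e., `g'` is HK integrable with `(HK)∫_a^b g' = g(b) - g(a)`
iff `g` has negligible conditional variation on the set where it is not differentiable. -/
theorem stmt8 (a b : ℝ) (hab : a ≤ b) (g : ℝ → ℝ)
    (hg : ∀ᵐ x ∂(MeasureTheory.volume.restrict (Set.Icc a b)), DifferentiableAt ℝ g x) :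
    HKIntegralTo a b (fun x => if DifferentiableAt ℝ g x then deriv g x else 0) (g b - g a)
      ↔ NegCondVar a b g {x ∈ Set.Icc a b | ¬ DifferentiableAt ℝ g x} := by
  have hc : (0:ℝ) < b - a + 1 := by linarith
  have hkey : ∀ ε : ℝ, 0 < ε → ε / (2 * (b - a + 1)) * (b - a) ≤ ε / 2 := by
    intro ε hε
    rw [div_mul_eq_mul_div, div_le_div_iff₀ (by linarith) two_pos]
    nlinarith
  constructor
  · intro hHK ε hε
    have hε' : 0 < ε / (2 * (b - a + 1)) := by positivity
    obtain ⟨δ₁, hδ₁g, hδ₁⟩ := hHK (ε/2) (by linarith)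
    obtain ⟨δ₂, hδ₂pos, hδ₂⟩ := key_estimate a b g {x ∈ Set.Icc a b | ¬ DifferentiableAt ℝ g x} (fun x => Iff.rfl) hε'
    refine ⟨fun x => min (δ₁ x) (δ₂ x),
      fun x hx => lt_min (hδ₁g x hx) (hδ₂pos x), fun P hP => ?_⟩
    have h1 := hδ₁ P (P.subordinate_of_le (fun x => min_le_left _ _) hP)
    have h2 := hδ₂ P (P.subordinate_of_le (fun x => min_le_right _ _) hP)
    simp only at h1
    rw [abs_le] at h2
    rw [abs_lt] at h1 ⊢
    have := hkey ε hε
    constructor <;> linarith [h1.1, h1.2, h2.1, h2.2, this]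
  · intro hNCV ε hε
    have hε' : 0 < ε / (2 * (b - a + 1)) := by positivity
    obtain ⟨δ₁, hδ₁g, hδ₁⟩ := hNCV (ε/2) (by linarith)
    obtain ⟨δ₂, hδ₂pos, hδ₂⟩ := key_estimate a b g {x ∈ Set.Icc a b | ¬ DifferentiableAt ℝ g x} (fun x => Iff.rfl) hε'
    refine ⟨fun x => min (δ₁ x) (δ₂ x),
      fun x hx => lt_min (hδ₁g x hx) (hδ₂pos x), fun P hP => ?_⟩
    have h1 := hδ₁ P (P.subordinate_of_le (fun x => min_le_left _ _) hP)
    have h2 := hδ₂ P (P.subordinate_of_le (fun x => min_le_right _ _) hP)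
    simp only
    rw [abs_le] at h2
    rw [abs_lt] at h1 ⊢
    have := hkey ε hε
    constructor <;> linarith [h1.1, h1.2, h2.1, h2.2, this]
end
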